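/- Let k ≥ 2, 2 ≤ j ≤ k and p ∈ [0,1). The oriented bootstrap percolation on rooted k-ary trees empties the root asymptotically almost surely if and only if g_p has no nonzero fixed point: lim_{n→∞} μ_n({η : B̄^{∘n}(η)_r = 1}) = 0 (where μ_n is the Bernoulli(p) product measure on the depth-n tree) if and only if x = 0 is the unique fixed point of g_p in [0,1]. -/

import Mathlib

open scoped Classical

noncomputable section

/-- The bootstrap recursion map `g_p(x) = p·∑_{i=k-j+1}^{k} C(k,i) xⁱ (1-x)^{k-i}`. -/
def g (k j : ℕ) (p x : ℝ) : ℝ :=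
  p * ∑ i ∈ Finset.Icc (k - j + 1) k, (Nat.choose k i : ℝ) * x ^ i * (1 - x) ^ (k - i)

section Bernoulli

variable {V : Type*} [Fintype V] [DecidableEq V]

/-- Bernoulli(p) product weight of a configuration (`true` = occupied, with probability `p`). -/
def wt (p : ℝ) (η : V → Bool) : ℝ := ∏ x : V, if η x then p else 1 - p

/-- Expectation under the Bernoulli(p) product measure μ. -/
def mean (p : ℝ) (f : (V → Bool) → ℝ) : ℝ := ∑ η : V → Bool, wt p η * f η

/-- Probability of an event under the Bernoulli(p) product measure μ. -/
def probEv (p : ℝ) (E : (V → Bool) → Prop) : ℝ := mean p (fun η => if E η then 1 else 0)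

/-- Conditional expectation `μ_A(f)` of `f` given the coordinates outside `A`. -/
def cexp (p : ℝ) (A : Finset V) (f : (V → Bool) → ℝ) (η : V → Bool) : ℝ :=
  ∑ ζ : V → Bool,
    (∏ x : V, if x ∈ A then (if ζ x then p else 1 - p) else (if ζ x = η x then 1 else 0)) * f ζ

/-- Conditional variance `Var_A(f)` on the coordinates of `A` given the remaining coordinates. -/
def cvar (p : ℝ) (A : Finset V) (f : (V → Bool) → ℝ) (η : V → Bool) : ℝ :=
  cexp p A (fun ζ => f ζ ^ 2) η - (cexp p A f η) ^ 2

/-- Variance `Var_μ(f)` under the Bernoulli(p) product measure. -/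
def varTot (p : ℝ) (f : (V → Bool) → ℝ) : ℝ := mean p (fun η => f η ^ 2) - (mean p f) ^ 2

end Bernoulli

/-- Vertices of the rooted `k`-ary tree of depth `n`: words of length `≤ n` over `Fin k`. -/
abbrev TV (k n : ℕ) := Σ m : Fin (n + 1), Fin m.val → Fin k

/-- The root: the empty word. -/
def rootT (k n : ℕ) : TV k n := ⟨⟨0, Nat.succ_pos n⟩, Fin.elim0⟩

/-- `y` is a child of `x` in the rooted tree. -/
def childOf {k n : ℕ} (x y : TV k n) : Prop :=
  ∃ h : y.1.val = x.1.val + 1, ∀ i : Fin x.1.val, y.2 (Fin.cast h.symm i.castSucc) = x.2 i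

/-- The oriented bootstrap map `B̄`: a vertex becomes empty iff it is already empty or
at least `j` of its children are empty. -/
def bootO {k n : ℕ} (j : ℕ) (η : TV k n → Bool) : TV k n → Bool := fun x =>
  if η x = false ∨ j ≤ (Finset.univ.filter fun y : TV k n => childOf x y ∧ η y = false).card
  then false else true

/-! The root of the depth-`(n + 1)` tree survives `n + 1` rounds iff it is occupied and fewer
than `j` of its `k` children are emptied within `n` rounds by the dynamics of their own subtrees,
which carry independent configurations. Hence the survival probabilities satisfy
`Q₀ = p = g_p(1)` and `Qₙ₊₁ = g_p(Qₙ)`, i.e. `Qₙ = g_p^{n+1}(1)`. As `p` times a binomial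
tail, `g_p` is continuous, increasing and maps `[0,1]` into itself, so `g_p^n(1)` decreases to the
largest fixed point of `g_p` in `[0,1]`; this limit is `0` iff `0` is the only fixed point. -/

open Filter Topology Polynomial

lemma le_iterate_one_of_isFixedPt {f : ℝ → ℝ} (hmono : MonotoneOn f (Set.Icc 0 1))
    (hmaps : Set.MapsTo f (Set.Icc 0 1) (Set.Icc 0 1)) {x : ℝ} (hx : x ∈ Set.Icc (0 : ℝ) 1)
    (hfx : f x = x) (n : ℕ) : x ≤ f^[n] 1 := by
  induction n with
  | zero => exact hx.2
  | succ n ih =>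
    rw [Function.iterate_succ_apply', ← hfx]
    exact hmono hx (hmaps.iterate n ⟨zero_le_one, le_rfl⟩) ih

lemma antitone_iterate_one {f : ℝ → ℝ} (hmono : MonotoneOn f (Set.Icc 0 1))
    (hmaps : Set.MapsTo f (Set.Icc 0 1) (Set.Icc 0 1)) : Antitone fun n => f^[n] 1 := by
  have hmem (n : ℕ) : f^[n] 1 ∈ Set.Icc (0 : ℝ) 1 := hmaps.iterate n ⟨zero_le_one, le_rfl⟩
  refine antitone_nat_of_succ_le fun n => ?_
  induction n with
  | zero => exact (hmem 1).2
  | succ n ih =>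
    simpa only [Function.iterate_succ_apply'] using hmono (hmem (n + 1)) (hmem n) ih

theorem tendsto_iterate_one_nhds_zero_iff {f : ℝ → ℝ} (hf : Continuous f)
    (hmono : MonotoneOn f (Set.Icc 0 1)) (hmaps : Set.MapsTo f (Set.Icc 0 1) (Set.Icc 0 1)) :
    Tendsto (fun n => f^[n] 1) atTop (𝓝 0) ↔
      ∀ x ∈ Set.Icc (0 : ℝ) 1, f x = x → x = 0 := by
  have hmem (n : ℕ) : f^[n] 1 ∈ Set.Icc (0 : ℝ) 1 := hmaps.iterate n ⟨zero_le_one, le_rfl⟩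
  refine ⟨fun h x hx hfx => ?_, fun h => ?_⟩
  · exact le_antisymm (ge_of_tendsto' h (le_iterate_one_of_isFixedPt hmono hmaps hx hfx)) hx.1
  · have hL := tendsto_atTop_ciInf (antitone_iterate_one hmono hmaps) ⟨0, by
      rintro _ ⟨n, rfl⟩
      exact (hmem n).1⟩
    have hLmem := isClosed_Icc.mem_of_tendsto hL (Eventually.of_forall hmem)
    rwa [h _ hLmem (isFixedPt_of_tendsto_iterate hL hf.continuousAt)] at hL

section Bernoulli

variable {V : Type*} [Fintype V] [DecidableEq V]

lemma sum_wt (p : ℝ) : ∑ η : V → Bool, wt p η = 1 :=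
  calc ∑ η : V → Bool, wt p η = ∏ _x : V, ∑ b : Bool, if b then p else 1 - p :=
        (Fintype.prod_sum fun (_ : V) (b : Bool) => if b then p else 1 - p).symm
    _ = 1 := by simp

lemma probEv_apply_eq_true (p : ℝ) (v : V) :
    probEv p (fun η : V → Bool => η v = true) = p := by
  set h : V → Bool → ℝ := fun x b => if b then p else if x = v then 0 else 1 - p
  have hprod : ∏ x, ∑ b, h x b = p := by
    simp [h, apply_ite (p + ·)]
  refine Eq.trans (Finset.sum_congr rfl fun η _ => ?_) ((Fintype.prod_sum h).symm.trans hprod)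
  dsimp only
  split_ifs with hv
  · rw [mul_one, wt]
    refine Finset.prod_congr rfl fun x _ => ?_
    by_cases hx : x = v
    · subst hx; simp [h, hv]
    · simp [h, hx]
  · rw [mul_zero, Finset.prod_eq_zero (Finset.mem_univ v)]
    simp [h, hv]

lemma probEv_eq_sum_filter (p : ℝ) (E : (V → Bool) → Prop) [DecidablePred E] :
    probEv p E = ∑ η ∈ Finset.univ.filter E, wt p η := by
  rw [probEv, mean, Finset.sum_filter]
  exact Finset.sum_congr rfl fun η _ => by split_ifs <;> simp

end Bernoulli

section BinomialCount

variable {α W : Type*} [Fintype α] [DecidableEq α] [Fintype W] (w : W → ℝ) (T : W → Prop)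
  [DecidablePred T] {q : ℝ}

lemma sum_prod_mul_ite_filter_eq (hw : ∑ ζ, w ζ = 1)
    (hq : ∑ ζ ∈ Finset.univ.filter T, w ζ = q) (S : Finset α) :
    ∑ f : α → W, (∏ c, w (f c)) *
        (if (Finset.univ.filter fun c => T (f c)) = S then 1 else 0)
      = q ^ S.card * (1 - q) ^ (Fintype.card α - S.card) := by
  have hcoord (c : α) :
      ∑ ζ, (if (T ζ ↔ c ∈ S) then w ζ else 0) = if c ∈ S then q else 1 - q := by
    by_cases hc : c ∈ S
    · simp only [hc, iff_true, if_true, ← Finset.sum_filter, hq]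
    · simp only [hc, iff_false, if_false, ← Finset.sum_filter, ← hw, ← hq]
      rw [← Finset.sum_filter_add_sum_filter_not Finset.univ T w, add_sub_cancel_left]
  calc _ = ∑ f : α → W, ∏ c, (if (T (f c) ↔ c ∈ S) then w (f c) else 0) := by
        refine Finset.sum_congr rfl fun f _ => ?_
        rw [Fintype.prod_ite_zero]
        simp only [Finset.ext_iff, Finset.mem_filter, Finset.mem_univ, true_and]
        split_ifs <;> simp
    _ = ∏ c, ∑ ζ, (if (T ζ ↔ c ∈ S) then w ζ else 0) :=
        (Fintype.prod_sum fun (c : α) (ζ : W) => if (T ζ ↔ c ∈ S) then w ζ else 0).symm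
    _ = _ := by
        rw [Finset.prod_congr rfl fun c _ => hcoord c, ← Finset.prod_mul_prod_compl S,
          Finset.prod_congr rfl fun c hc => if_pos hc,
          Finset.prod_congr rfl fun c hc => if_neg (Finset.mem_compl.mp hc),
          Finset.prod_const, Finset.prod_const, Finset.card_compl]

lemma sum_prod_mul_ite_card_filter_eq (hw : ∑ ζ, w ζ = 1)
    (hq : ∑ ζ ∈ Finset.univ.filter T, w ζ = q) (i : ℕ) :
    ∑ f : α → W, (∏ c, w (f c)) *
        (if (Finset.univ.filter fun c => T (f c)).card = i then 1 else 0)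
      = (Fintype.card α).choose i * q ^ i * (1 - q) ^ (Fintype.card α - i) := by
  have hsplit (f : α → W) :
      (if (Finset.univ.filter fun c => T (f c)).card = i then (1 : ℝ) else 0)
        = ∑ S ∈ Finset.univ.powersetCard i,
            if (Finset.univ.filter fun c => T (f c)) = S then 1 else 0 := by
    rw [Finset.sum_ite_eq]
    simp only [Finset.mem_powersetCard_univ]
  simp only [hsplit, Finset.mul_sum]
  rw [Finset.sum_comm, Finset.sum_congr rfl fun S hS => by
      rw [sum_prod_mul_ite_filter_eq w T hw hq, Finset.mem_powersetCard_univ.1 hS],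
    Finset.sum_const, Finset.card_powersetCard, Finset.card_univ, nsmul_eq_mul, mul_assoc]

lemma sum_prod_mul_ite_card_filter_mem (hw : ∑ ζ, w ζ = 1)
    (hq : ∑ ζ ∈ Finset.univ.filter T, w ζ = q) (I : Finset ℕ) :
    ∑ f : α → W, (∏ c, w (f c)) *
        (if (Finset.univ.filter fun c => T (f c)).card ∈ I then 1 else 0)
      = ∑ i ∈ I, (Fintype.card α).choose i * q ^ i * (1 - q) ^ (Fintype.card α - i) := by
  have hmem (x : ℕ) :
      (if x ∈ I then (1 : ℝ) else 0) = ∑ i ∈ I, if x = i then 1 else 0 := by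
    rw [Finset.sum_ite_eq]
  simp only [hmem, Finset.mul_sum]
  rw [Finset.sum_comm]
  exact Finset.sum_congr rfl fun i _ => sum_prod_mul_ite_card_filter_eq w T hw hq i

end BinomialCount

lemma eval_bernsteinPolynomial_nonneg (n ν : ℕ) {x : ℝ} (hx : x ∈ Set.Icc (0 : ℝ) 1) :
    0 ≤ (bernsteinPolynomial ℝ n ν).eval x := by
  have : 0 ≤ 1 - x := sub_nonneg.2 hx.2
  have := hx.1
  simp only [bernsteinPolynomial, eval_mul, eval_pow, eval_sub, eval_one, eval_X, eval_natCast]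
  positivity

namespace OrientedBootstrap

def binomTail (k t : ℕ) : ℝ[X] := ∑ i ∈ Finset.Icc t k, bernsteinPolynomial ℝ k i

lemma derivative_binomTail (k s : ℕ) :
    derivative (binomTail k (s + 1)) = k * bernsteinPolynomial ℝ (k - 1) s := by
  rcases Nat.lt_or_ge k (s + 1) with hks | hsk
  · rw [binomTail, Finset.Icc_eq_empty_of_lt hks, Finset.sum_empty, derivative_zero]
    rcases Nat.eq_zero_or_pos k with rfl | hk
    · simp
    · rw [bernsteinPolynomial.eq_zero_of_lt ℝ (by omega), mul_zero]
  set b := bernsteinPolynomial ℝ (k - 1)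
  have telescope : ∑ ν ∈ Finset.Ico s k, (b ν - b (ν + 1)) = b s - b k := by
    rw [← neg_sub (b k), ← Finset.sum_Ico_sub b (by omega), ← Finset.sum_neg_distrib]
    simp only [neg_sub]
  have hbk : b k = 0 := bernsteinPolynomial.eq_zero_of_lt ℝ (by omega)
  rw [binomTail, derivative_sum, ← Finset.Ico_add_one_right_eq_Icc, ← Finset.sum_Ico_add']
  simp only [bernsteinPolynomial.derivative_succ, ← Finset.mul_sum]
  rw [telescope, hbk, sub_zero]

lemma monotoneOn_eval_binomTail (k t : ℕ) :
    MonotoneOn (fun x => (binomTail k t).eval x) (Set.Icc 0 1) := by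
  rcases t with _ | s
  · have : binomTail k 0 = 1 := by
      rw [binomTail, ← Nat.range_succ_eq_Icc_zero, bernsteinPolynomial.sum]
    simp only [this, eval_one]
    exact monotoneOn_const
  refine monotoneOn_of_deriv_nonneg (convex_Icc 0 1) (binomTail k _).continuousOn
    (binomTail k _).differentiableOn fun x hx => ?_
  rw [interior_Icc] at hx
  rw [Polynomial.deriv, derivative_binomTail, eval_mul, eval_natCast]
  exact mul_nonneg k.cast_nonneg (eval_bernsteinPolynomial_nonneg _ _ (Set.Ioo_subset_Icc_self hx))

lemma eval_binomTail_nonneg (k t : ℕ) {x : ℝ} (hx : x ∈ Set.Icc (0 : ℝ) 1) :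
    0 ≤ (binomTail k t).eval x := by
  rw [binomTail, eval_finsetSum]
  exact Finset.sum_nonneg fun i _ => eval_bernsteinPolynomial_nonneg k i hx

lemma eval_binomTail_le_one (k t : ℕ) {x : ℝ} (hx : x ∈ Set.Icc (0 : ℝ) 1) :
    (binomTail k t).eval x ≤ 1 := by
  calc (binomTail k t).eval x
      ≤ ∑ i ∈ Finset.range (k + 1), (bernsteinPolynomial ℝ k i).eval x := by
        rw [binomTail, eval_finsetSum]
        refine Finset.sum_le_sum_of_subset_of_nonneg (fun i hi => ?_)
          fun i _ _ => eval_bernsteinPolynomial_nonneg k i hx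
        simp only [Finset.mem_Icc, Finset.mem_range] at hi ⊢
        omega
    _ = 1 := by rw [← eval_finsetSum, bernsteinPolynomial.sum, eval_one]

lemma eval_binomTail_one {k t : ℕ} (ht : t ≤ k) : (binomTail k t).eval 1 = 1 := by
  simp [binomTail, eval_finsetSum, bernsteinPolynomial.eval_at_1, ht]

lemma g_eq_eval_binomTail (k j : ℕ) (p x : ℝ) :
    g k j p x = p * (binomTail k (k - j + 1)).eval x := by
  simp [g, binomTail, eval_finsetSum, bernsteinPolynomial]

lemma g_one {k j : ℕ} (p : ℝ) (hj : 1 ≤ j) (hjk : j ≤ k) : g k j p 1 = p := by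
  rw [g_eq_eval_binomTail, eval_binomTail_one (by omega), mul_one]

lemma continuous_g (k j : ℕ) (p : ℝ) : Continuous (g k j p) := by
  simp only [funext (g_eq_eval_binomTail k j p)]
  fun_prop

lemma monotoneOn_g (k j : ℕ) {p : ℝ} (hp : 0 ≤ p) : MonotoneOn (g k j p) (Set.Icc 0 1) := by
  intro x hx y hy hxy
  simp only [g_eq_eval_binomTail]
  exact mul_le_mul_of_nonneg_left (monotoneOn_eval_binomTail _ _ hx hy hxy) hp

lemma mapsTo_g (k j : ℕ) {p : ℝ} (hp : p ∈ Set.Icc (0 : ℝ) 1) :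
    Set.MapsTo (g k j p) (Set.Icc 0 1) (Set.Icc 0 1) := by
  intro x hx
  rw [g_eq_eval_binomTail]
  exact ⟨mul_nonneg hp.1 (eval_binomTail_nonneg _ _ hx),
    mul_le_one₀ hp.2 (eval_binomTail_nonneg _ _ hx) (eval_binomTail_le_one _ _ hx)⟩

variable {k n : ℕ}

def cons (c : Fin k) (y : TV k n) : TV k (n + 1) :=
  ⟨⟨y.1.val + 1, Nat.succ_lt_succ y.1.isLt⟩, Fin.cons c y.2⟩

lemma cons_injective2 : Function.Injective2 (cons : Fin k → TV k n → TV k (n + 1)) := by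
  rintro c c' ⟨⟨m, hm⟩, y⟩ ⟨⟨m', hm'⟩, y'⟩ h
  simp only [cons, Sigma.mk.injEq, Fin.mk.injEq, Nat.add_right_cancel_iff] at h
  obtain ⟨rfl, h⟩ := h
  obtain ⟨rfl, rfl⟩ := Fin.cons_inj.mp (eq_of_heq h)
  exact ⟨rfl, rfl⟩

lemma cons_ne_rootT (c : Fin k) (y : TV k n) : cons c y ≠ rootT k (n + 1) := by
  intro h
  have := congrArg (fun x : TV k (n + 1) => x.1.val) h
  simp [cons, rootT] at this

lemma eq_rootT_or_exists_cons (x : TV k (n + 1)) :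
    x = rootT k (n + 1) ∨ ∃ c y, x = cons c y := by
  obtain ⟨⟨_ | m, hm⟩, w⟩ := x
  · exact Or.inl (Sigma.ext rfl (heq_of_eq (funext fun i => i.elim0)))
  · exact Or.inr ⟨w 0, ⟨⟨m, by omega⟩, Fin.tail w⟩, by simp [cons, Fin.cons_self_tail]⟩

def succEquiv : Option (Fin k × TV k n) ≃ TV k (n + 1) :=
  Equiv.ofBijective (fun o => o.elim (rootT k (n + 1)) fun cy => cons cy.1 cy.2) <| by
    refine ⟨fun o o' h => ?_, fun x => ?_⟩
    · rcases o with _ | ⟨c, y⟩ <;> rcases o' with _ | ⟨c', y'⟩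
      · rfl
      · exact absurd h.symm (cons_ne_rootT c' y')
      · exact absurd h (cons_ne_rootT c y)
      · obtain ⟨rfl, rfl⟩ := cons_injective2 h
        rfl
    · rcases eq_rootT_or_exists_cons x with rfl | ⟨c, y, rfl⟩
      · exact ⟨none, rfl⟩
      · exact ⟨some (c, y), rfl⟩

lemma eq_rootT_of_fst_eq_zero (x : TV k n) (h : x.1.val = 0) : x = rootT k n := by
  obtain ⟨⟨m, hm⟩, w⟩ := x
  subst h
  exact Sigma.ext rfl (heq_of_eq (funext fun i => i.elim0))

lemma childOf_rootT_iff (z : TV k (n + 1)) :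
    childOf (rootT k (n + 1)) z ↔ ∃ c, z = cons c (rootT k n) := by
  refine ⟨fun ⟨hlen, _⟩ => ?_, fun ⟨c, hz⟩ => hz ▸ ⟨rfl, fun i => i.elim0⟩⟩
  rcases eq_rootT_or_exists_cons z with rfl | ⟨c, y, rfl⟩
  · exact absurd hlen (by simp [rootT])
  · exact ⟨c, by rw [eq_rootT_of_fst_eq_zero y (by simpa [cons, rootT] using hlen)]⟩

lemma childOf_cons_iff (c : Fin k) (y : TV k n) (z : TV k (n + 1)) :
    childOf (cons c y) z ↔ ∃ z', z = cons c z' ∧ childOf y z' := by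
  constructor
  · rintro ⟨hlen, hpre⟩
    rcases eq_rootT_or_exists_cons z with rfl | ⟨c', z', rfl⟩
    · exact absurd hlen (by simp [rootT])
    · have hc : c' = c := hpre ⟨0, Nat.succ_pos _⟩
      subst hc
      exact ⟨z', rfl, by simpa [cons] using hlen, fun i => hpre i.succ⟩
  · rintro ⟨z', rfl, hlen, hpre⟩
    refine ⟨by simp [cons, hlen], fun i => ?_⟩
    cases i using Fin.cases with
    | zero => rfl
    | succ i => exact hpre i

def emptyChildren (η : TV k n → Bool) (x : TV k n) : Finset (TV k n) :=
  Finset.univ.filter fun y => childOf x y ∧ η y = false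

lemma bootO_eq_true_iff {j : ℕ} {η : TV k n → Bool} {x : TV k n} :
    bootO j η x = true ↔ η x = true ∧ (emptyChildren η x).card < j := by
  cases hx : η x <;> simp [bootO, emptyChildren, hx]

lemma emptyChildren_subset {η η' : TV k n → Bool} (h : η ≤ η') (x : TV k n) :
    emptyChildren η' x ⊆ emptyChildren η x := by
  intro y
  simp only [emptyChildren, Finset.mem_filter, Finset.mem_univ, true_and]
  exact fun ⟨hxy, hy⟩ => ⟨hxy, le_bot_iff.mp ((h y).trans_eq hy)⟩

lemma bootO_le (j : ℕ) (η : TV k n → Bool) : bootO j η ≤ η :=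
  fun _ => Bool.le_iff_imp.mpr fun h => (bootO_eq_true_iff.mp h).1

/- `B̄` only empties sites, so the set of empty children of `x` only grows along the dynamics and
surviving `m + 1` rounds depends only on the count after the last `m`. -/
lemma iterate_succ_bootO_eq_true_iff (j m : ℕ) (η : TV k n → Bool) (x : TV k n) :
    (bootO j)^[m + 1] η x = true ↔
      η x = true ∧ (emptyChildren ((bootO j)^[m] η) x).card < j := by
  induction m with
  | zero => exact bootO_eq_true_iff
  | succ m ih =>
    have hle : (bootO j)^[m + 1] η ≤ (bootO j)^[m] η := by
      rw [Function.iterate_succ_apply']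
      exact bootO_le j _
    have hcard := Finset.card_le_card (emptyChildren_subset hle x)
    rw [Function.iterate_succ_apply' _ (m + 1), bootO_eq_true_iff, ih]
    exact ⟨fun ⟨⟨hx, _⟩, h⟩ => ⟨hx, h⟩,
      fun ⟨hx, h⟩ => ⟨⟨hx, hcard.trans_lt h⟩, h⟩⟩

def subtree (c : Fin k) (η : TV k (n + 1) → Bool) : TV k n → Bool := fun y => η (cons c y)

lemma card_emptyChildren_cons (c : Fin k) (η : TV k (n + 1) → Bool) (y : TV k n) :
    (emptyChildren η (cons c y)).card = (emptyChildren (subtree c η) y).card := by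
  symm
  refine Finset.card_bij (fun z _ => cons c z) (fun z hz => ?_)
    (fun _ _ _ _ h => (cons_injective2 h).2) (fun z hz => ?_)
  · simp only [emptyChildren, Finset.mem_filter, Finset.mem_univ, true_and] at hz ⊢
    exact ⟨(childOf_cons_iff c y _).mpr ⟨z, rfl, hz.1⟩, hz.2⟩
  · simp only [emptyChildren, Finset.mem_filter, Finset.mem_univ, true_and] at hz
    obtain ⟨z', rfl, hz'⟩ := (childOf_cons_iff c y z).mp hz.1
    exact ⟨z', by simpa [emptyChildren] using ⟨hz', hz.2⟩, rfl⟩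

lemma card_emptyChildren_rootT (η : TV k (n + 1) → Bool) :
    (emptyChildren η (rootT k (n + 1))).card
      = (Finset.univ.filter fun c => η (cons c (rootT k n)) = false).card := by
  symm
  refine Finset.card_bij (fun c _ => cons c (rootT k n)) (fun c hc => ?_)
    (fun _ _ _ _ h => (cons_injective2 h).1) (fun z hz => ?_)
  · simp only [emptyChildren, Finset.mem_filter, Finset.mem_univ, true_and] at hc ⊢
    exact ⟨(childOf_rootT_iff _).mpr ⟨c, rfl⟩, hc⟩
  · simp only [emptyChildren, Finset.mem_filter, Finset.mem_univ, true_and] at hz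
    obtain ⟨c, rfl⟩ := (childOf_rootT_iff z).mp hz.1
    exact ⟨c, by simpa using hz.2, rfl⟩

lemma bootO_subtree (j : ℕ) (c : Fin k) (η : TV k (n + 1) → Bool) :
    bootO j (subtree c η) = subtree c (bootO j η) := by
  funext y
  show bootO j (subtree c η) y = bootO j η (cons c y)
  rw [Bool.eq_iff_iff, bootO_eq_true_iff, bootO_eq_true_iff, card_emptyChildren_cons]
  rfl

lemma iterate_bootO_subtree (j m : ℕ) (c : Fin k) (η : TV k (n + 1) → Bool) :
    (bootO j)^[m] (subtree c η) = subtree c ((bootO j)^[m] η) := by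
  induction m with
  | zero => rfl
  | succ m ih => rw [Function.iterate_succ_apply', Function.iterate_succ_apply', ih, bootO_subtree]

lemma iterate_bootO_rootT_eq_true_iff (j : ℕ) (η : TV k (n + 1) → Bool) :
    (bootO j)^[n + 1] η (rootT k (n + 1)) = true ↔
      η (rootT k (n + 1)) = true ∧
        (Finset.univ.filter fun c =>
          (bootO j)^[n] (subtree c η) (rootT k n) = false).card < j := by
  simp only [iterate_succ_bootO_eq_true_iff, card_emptyChildren_rootT, iterate_bootO_subtree]
  rfl

lemma wt_eq_mul_prod_subtree (p : ℝ) (η : TV k (n + 1) → Bool) :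
    wt p η = (if η (rootT k (n + 1)) then p else 1 - p) * ∏ c, wt p (subtree c η) := by
  rw [wt, ← succEquiv.prod_comp, Fintype.prod_option, Fintype.prod_prod_type]
  rfl

def rootSubtreesEquiv : (TV k (n + 1) → Bool) ≃ Bool × (Fin k → TV k n → Bool) :=
  (Equiv.arrowCongr succEquiv.symm (Equiv.refl Bool)).trans <|
    Equiv.piOptionEquivProd.trans <| Equiv.prodCongr (Equiv.refl Bool) (Equiv.curry _ _ _)

lemma rootSubtreesEquiv_symm_apply_rootT (b : Bool) (fs : Fin k → TV k n → Bool) :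
    rootSubtreesEquiv.symm (b, fs) (rootT k (n + 1)) = b :=
  congrArg Prod.fst (rootSubtreesEquiv.apply_symm_apply (b, fs))

lemma subtree_rootSubtreesEquiv_symm (b : Bool) (fs : Fin k → TV k n → Bool) (c : Fin k) :
    subtree c (rootSubtreesEquiv.symm (b, fs)) = fs c :=
  congrFun (congrArg Prod.snd (rootSubtreesEquiv.apply_symm_apply (b, fs))) c

lemma mean_eq_sum_root_subtrees (p : ℝ) (f : (TV k (n + 1) → Bool) → ℝ) :
    mean p f = ∑ b : Bool, (if b then p else 1 - p) *
      ∑ fs : Fin k → TV k n → Bool,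
        (∏ c, wt p (fs c)) * f (rootSubtreesEquiv.symm (b, fs)) := by
  rw [mean, ← rootSubtreesEquiv.symm.sum_comp, Fintype.sum_prod_type]
  refine Finset.sum_congr rfl fun b _ => ?_
  rw [Finset.mul_sum]
  refine Finset.sum_congr rfl fun fs _ => ?_
  simp only [wt_eq_mul_prod_subtree, rootSubtreesEquiv_symm_apply_rootT,
    subtree_rootSubtreesEquiv_symm, mul_assoc]

def rootSurvivalProb (k j : ℕ) (p : ℝ) (n : ℕ) : ℝ :=
  probEv p fun η : TV k n → Bool => (bootO j)^[n] η (rootT k n) = true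

lemma rootSurvivalProb_zero (k j : ℕ) (p : ℝ) : rootSurvivalProb k j p 0 = p :=
  probEv_apply_eq_true p (rootT k 0)

lemma rootSurvivalProb_succ {j : ℕ} (p : ℝ) (hjk : j ≤ k) :
    rootSurvivalProb k j p (n + 1) = g k j p (rootSurvivalProb k j p n) := by
  have hcount (fs : Fin k → TV k n → Bool) :
      (Finset.univ.filter fun c => (bootO j)^[n] (fs c) (rootT k n) = false).card < j ↔
        (Finset.univ.filter fun c => (bootO j)^[n] (fs c) (rootT k n) = true).card
          ∈ Finset.Icc (k - j + 1) k := by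
    have := Finset.card_filter_add_card_filter_not (s := Finset.univ)
      fun c => (bootO j)^[n] (fs c) (rootT k n) = true
    simp only [Bool.not_eq_true, Finset.card_univ, Fintype.card_fin] at this
    rw [Finset.mem_Icc]
    omega
  calc rootSurvivalProb k j p (n + 1)
      = p * ∑ fs : Fin k → TV k n → Bool, (∏ c, wt p (fs c)) *
          if (Finset.univ.filter fun c => (bootO j)^[n] (fs c) (rootT k n) = true).card
            ∈ Finset.Icc (k - j + 1) k then 1 else 0 := by
        rw [rootSurvivalProb, probEv, mean_eq_sum_root_subtrees, Fintype.sum_bool]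
        simp only [iterate_bootO_rootT_eq_true_iff, rootSubtreesEquiv_symm_apply_rootT,
          subtree_rootSubtreesEquiv_symm, if_true, true_and, hcount, Bool.false_eq_true, false_and,
          if_false, mul_zero, Finset.sum_const_zero, add_zero]
    _ = g k j p (rootSurvivalProb k j p n) := by
        have h := sum_prod_mul_ite_card_filter_mem (α := Fin k) (wt p)
          (fun ζ => (bootO j)^[n] ζ (rootT k n) = true) (sum_wt p) (probEv_eq_sum_filter p _).symm
          (Finset.Icc (k - j + 1) k)
        rw [Fintype.card_fin] at h
        rw [h]
        rfl

lemma rootSurvivalProb_eq_iterate_g {k j : ℕ} (p : ℝ) (hj : 1 ≤ j) (hjk : j ≤ k) (n : ℕ) :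
    rootSurvivalProb k j p n = (g k j p)^[n + 1] 1 := by
  induction n with
  | zero => rw [rootSurvivalProb_zero, Function.iterate_one, g_one p hj hjk]
  | succ n ih => rw [rootSurvivalProb_succ p hjk, ih, Function.iterate_succ_apply' _ (n + 1)]

end OrientedBootstrap

open OrientedBootstrap

theorem oriented_bootstrap_empties_iff_general (k j : ℕ) (p : ℝ) (hj : 2 ≤ j)
    (hjk : j ≤ k) (hp : p ∈ Set.Ico (0 : ℝ) 1) :
    Filter.Tendsto
        (fun n : ℕ => probEv p (fun η : TV k n → Bool => (bootO j)^[n] η (rootT k n) = true))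
        Filter.atTop (nhds 0)
      ↔ ∀ x ∈ Set.Icc (0 : ℝ) 1, g k j p x = x → x = 0 := by
  have hp' : p ∈ Set.Icc (0 : ℝ) 1 := Set.Ico_subset_Icc_self hp
  have h := tendsto_iterate_one_nhds_zero_iff (continuous_g k j p) (monotoneOn_g k j hp'.1)
    (mapsTo_g k j hp')
  rw [← tendsto_add_atTop_iff_nat 1] at h
  simp only [← rootSurvivalProb_eq_iterate_g p (by omega) hjk] at h
  exact h

theorem oriented_bootstrap_empties_iff (k j : ℕ) (p : ℝ) (hk : 2 ≤ k) (hj : 2 ≤ j)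
    (hjk : j ≤ k) (hp : p ∈ Set.Ico (0 : ℝ) 1) :
    Filter.Tendsto
        (fun n : ℕ => probEv p (fun η : TV k n → Bool => (bootO j)^[n] η (rootT k n) = true))
        Filter.atTop (nhds 0)
      ↔ ∀ x ∈ Set.Icc (0 : ℝ) 1, g k j p x = x → x = 0 :=
  oriented_bootstrap_empties_iff_general k j p hj hjk hp
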